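/- arXiv:1101.1533 — 3 statements merged into one kernel-verified Lean document; each statement's English description precedes it below -/
import Mathlib

section
/- Let d ≥ 3, σ_d > 0, and R : ℝ → ℝ Lipschitz with constant L and R(0)=0. Define the operator (T Q)(r) = m r^d + (1/d) ∫₀¹ R(Q'(s) s^{1-d} σ_d^{-1}) s^{1-d} Q(s) G(r,s) ds, where G(r,s) = r^d(1-s^d) for s ≥ r and s^d(1-r^d) for s < r. If |Q|_{2-d} ≤ ρ and |Q'|_{3-d} ≤ ρ (weighted sup norms over (0,1]), then |T Q|_{2-d} ≤ L ρ² /(2 σ_d (d-2)) + m. -/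
/-!
Since `R` is `L`-Lipschitz with `R 0 = 0`, the weighted bounds on `Q` and `Q'` bound the integrand
of `T` by `(L ρ² / σ) s⁻³ G(r, s)`, and `0 ≤ G(r, s) ≤ min(r, s)ᵈ`. Splitting at `s = r`,
`∫₀¹ s⁻³ min(r, s)ᵈ ds ≤ r^(d-2) (1/(d-2) + 1/2)`, and `(1/d) (1/(d-2) + 1/2) = 1/(2(d-2))`;
the term `m rᵈ` contributes at most `m` after multiplication by `r^(2-d)`.
-/

open Set MeasureTheory

noncomputable def G (d : ℕ) (r s : ℝ) : ℝ :=
  if s ≥ r then r ^ d * (1 - s ^ d) else s ^ d * (1 - r ^ d)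

noncomputable def T (d : ℕ) (m σ : ℝ) (R : ℝ → ℝ) (Q Q' : ℝ → ℝ) (r : ℝ) : ℝ :=
  m * r ^ d +
    (1 / d) * ∫ s in Ioc (0:ℝ) 1,
      R (Q' s * s ^ ((1:ℝ) - d) * σ⁻¹) * s ^ ((1:ℝ) - d) * Q s * G d r s

lemma G_nonneg {d : ℕ} {r s : ℝ} (hr : r ∈ Icc (0:ℝ) 1) (hs : s ∈ Icc (0:ℝ) 1) :
    0 ≤ G d r s := by
  unfold G
  split_ifs
  · exact mul_nonneg (pow_nonneg hr.1 d) (sub_nonneg.2 (pow_le_one₀ hs.1 hs.2))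
  · exact mul_nonneg (pow_nonneg hs.1 d) (sub_nonneg.2 (pow_le_one₀ hr.1 hr.2))

lemma G_le_min_pow {d : ℕ} {r s : ℝ} (hr : 0 ≤ r) (hs : 0 ≤ s) : G d r s ≤ min r s ^ d := by
  unfold G
  split_ifs with h
  · rw [min_eq_left h]
    nlinarith [pow_nonneg hr d, pow_nonneg hs d]
  · rw [min_eq_right (le_of_not_ge h)]
    nlinarith [pow_nonneg hr d, pow_nonneg hs d]

section MinKernel

variable {p r : ℝ}

lemma eqOn_rpow_neg_three_mul_min_rpow_of_le :
    EqOn (fun s => s ^ (-3:ℝ) * min r s ^ p) (fun s => s ^ (p - 3)) (Ioc 0 r) := by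
  intro s ⟨hs, hsr⟩
  simp only
  rw [min_eq_right hsr, ← Real.rpow_add hs]
  ring_nf

lemma eqOn_rpow_neg_three_mul_min_rpow_of_ge :
    EqOn (fun s => s ^ (-3:ℝ) * min r s ^ p) (fun s => r ^ p * s ^ (-3:ℝ)) (Ioc r 1) := by
  intro s ⟨hrs, _⟩
  simp only
  rw [min_eq_left hrs.le, mul_comm]

lemma integrableOn_rpow_neg_three_mul_min_rpow (hp : 2 < p) (hr : r ∈ Ioc (0:ℝ) 1) :
    IntegrableOn (fun s => s ^ (-3:ℝ) * min r s ^ p) (Ioc 0 1) := by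
  have h0 : (0:ℝ) ∉ uIcc r 1 := by rw [uIcc_of_le hr.2]; exact fun h => hr.1.not_ge h.1
  rw [← Ioc_union_Ioc_eq_Ioc hr.1.le hr.2]
  refine IntegrableOn.union ?_ ?_
  · refine IntegrableOn.congr_fun ?_ eqOn_rpow_neg_three_mul_min_rpow_of_le.symm
      measurableSet_Ioc
    exact (intervalIntegrable_iff_integrableOn_Ioc_of_le hr.1.le).1
      (intervalIntegral.intervalIntegrable_rpow' (by linarith))
  · refine IntegrableOn.congr_fun ?_ eqOn_rpow_neg_three_mul_min_rpow_of_ge.symm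
      measurableSet_Ioc
    exact ((intervalIntegrable_iff_integrableOn_Ioc_of_le hr.2).1
      (intervalIntegral.intervalIntegrable_rpow (Or.inr h0))).const_mul _

lemma setIntegral_rpow_neg_three_mul_min_rpow_le (hp : 2 < p) (hr : r ∈ Ioc (0:ℝ) 1) :
    ∫ s in Ioc 0 1, s ^ (-3:ℝ) * min r s ^ p ≤ r ^ (p - 2) * (1 / (p - 2) + 1 / 2) := by
  have h0 : (0:ℝ) ∉ uIcc r 1 := by rw [uIcc_of_le hr.2]; exact fun h => hr.1.not_ge h.1
  have hint := integrableOn_rpow_neg_three_mul_min_rpow hp hr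
  rw [← Ioc_union_Ioc_eq_Ioc hr.1.le hr.2] at hint ⊢
  rw [setIntegral_union (Ioc_disjoint_Ioc_of_le le_rfl) measurableSet_Ioc
      (hint.mono_set subset_union_left) (hint.mono_set subset_union_right),
    setIntegral_congr_fun measurableSet_Ioc eqOn_rpow_neg_three_mul_min_rpow_of_le,
    setIntegral_congr_fun measurableSet_Ioc eqOn_rpow_neg_three_mul_min_rpow_of_ge,
    integral_const_mul, ← intervalIntegral.integral_of_le hr.1.le,
    ← intervalIntegral.integral_of_le hr.2, integral_rpow (Or.inl (by linarith)),
    integral_rpow (Or.inr ⟨by norm_num, h0⟩)]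
  rw [show p - 3 + 1 = p - 2 by ring, show (-3:ℝ) + 1 = -2 by norm_num,
    Real.zero_rpow (by linarith), Real.one_rpow]
  have hpow : r ^ p * r ^ (-2:ℝ) = r ^ (p - 2) := by rw [← Real.rpow_add hr.1]; ring_nf
  have hr0 : 0 ≤ r ^ p := Real.rpow_nonneg hr.1.le p
  calc (r ^ (p - 2) - 0) / (p - 2) + r ^ p * ((1 - r ^ (-2:ℝ)) / -2)
      = r ^ (p - 2) * (1 / (p - 2) + 1 / 2) - r ^ p / 2 := by rw [← hpow]; ring
    _ ≤ r ^ (p - 2) * (1 / (p - 2) + 1 / 2) := by linarith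

end MinKernel

lemma abs_mul_rpow_add_le {f ρ s a c : ℝ} (hs : 0 < s) (h : |f * s ^ a| ≤ ρ) :
    |f * s ^ (a + c)| ≤ ρ * s ^ c := by
  rw [Real.rpow_add hs, ← mul_assoc, abs_mul, abs_of_pos (Real.rpow_pos_of_pos hs c)]
  exact mul_le_mul_of_nonneg_right h (Real.rpow_pos_of_pos hs c).le

lemma abs_T_integrand_le {d : ℕ} {L ρ σ r s : ℝ} {R Q Q' : ℝ → ℝ} (hL : 0 ≤ L) (hσ : 0 < σ)
    (hR : ∀ x, |R x| ≤ L * |x|) (hr : r ∈ Ioc (0:ℝ) 1) (hs : s ∈ Ioc (0:ℝ) 1)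
    (hQ : |Q s * s ^ ((2:ℝ) - d)| ≤ ρ) (hQ' : |Q' s * s ^ ((3:ℝ) - d)| ≤ ρ) :
    |R (Q' s * s ^ ((1:ℝ) - d) * σ⁻¹) * s ^ ((1:ℝ) - d) * Q s * G d r s|
      ≤ L * ρ ^ 2 / σ * (s ^ (-3:ℝ) * min r s ^ (d:ℝ)) := by
  have hQ₁ : |Q s * s ^ ((1:ℝ) - d)| ≤ ρ * s ^ (-1:ℝ) := by
    simpa only [show (2 - d : ℝ) + -1 = 1 - d by ring] using abs_mul_rpow_add_le (c := -1) hs.1 hQ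
  have hQ'₂ : |Q' s * s ^ ((1:ℝ) - d)| ≤ ρ * s ^ (-2:ℝ) := by
    simpa only [show (3 - d : ℝ) + -2 = 1 - d by ring] using abs_mul_rpow_add_le (c := -2) hs.1 hQ'
  have hRQ' : |R (Q' s * s ^ ((1:ℝ) - d) * σ⁻¹)| ≤ L * (ρ * s ^ (-2:ℝ) * σ⁻¹) := by
    refine (hR _).trans (mul_le_mul_of_nonneg_left ?_ hL)
    rw [abs_mul, abs_of_pos (inv_pos.2 hσ)]
    exact mul_le_mul_of_nonneg_right hQ'₂ (inv_pos.2 hσ).le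
  have hG : |G d r s| ≤ min r s ^ (d:ℝ) := by
    rw [abs_of_nonneg (G_nonneg (Ioc_subset_Icc_self hr) (Ioc_subset_Icc_self hs)),
      Real.rpow_natCast]
    exact G_le_min_pow hr.1.le hs.1.le
  have hs3 : s ^ (-3:ℝ) = s ^ (-2:ℝ) * s ^ (-1:ℝ) := by rw [← Real.rpow_add hs.1]; norm_num
  calc |R (Q' s * s ^ ((1:ℝ) - d) * σ⁻¹) * s ^ ((1:ℝ) - d) * Q s * G d r s|
      = |R (Q' s * s ^ ((1:ℝ) - d) * σ⁻¹)| * |Q s * s ^ ((1:ℝ) - d)| * |G d r s| := by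
        simp only [abs_mul]; ring
    _ ≤ L * (ρ * s ^ (-2:ℝ) * σ⁻¹) * (ρ * s ^ (-1:ℝ)) * min r s ^ (d:ℝ) :=
        mul_le_mul (mul_le_mul hRQ' hQ₁ (abs_nonneg _) ((abs_nonneg _).trans hRQ')) hG
          (abs_nonneg _) (mul_nonneg ((abs_nonneg _).trans hRQ') ((abs_nonneg _).trans hQ₁))
    _ = L * ρ ^ 2 / σ * (s ^ (-3:ℝ) * min r s ^ (d:ℝ)) := by rw [hs3]; ring

lemma abs_T_integral_le {d : ℕ} {L ρ σ r : ℝ} {R Q Q' : ℝ → ℝ} (hd : 2 < (d:ℝ)) (hL : 0 ≤ L)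
    (hσ : 0 < σ) (hR : ∀ x, |R x| ≤ L * |x|)
    (hQ : ∀ s ∈ Ioc (0:ℝ) 1, |Q s * s ^ ((2:ℝ) - d)| ≤ ρ)
    (hQ' : ∀ s ∈ Ioc (0:ℝ) 1, |Q' s * s ^ ((3:ℝ) - d)| ≤ ρ) (hr : r ∈ Ioc (0:ℝ) 1) :
    |∫ s in Ioc (0:ℝ) 1, R (Q' s * s ^ ((1:ℝ) - d) * σ⁻¹) * s ^ ((1:ℝ) - d) * Q s * G d r s|
      ≤ L * ρ ^ 2 / σ * (r ^ ((d:ℝ) - 2) * (1 / (d - 2) + 1 / 2)) :=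
  calc _ ≤ ∫ s in Ioc (0:ℝ) 1,
          |R (Q' s * s ^ ((1:ℝ) - d) * σ⁻¹) * s ^ ((1:ℝ) - d) * Q s * G d r s| :=
        abs_integral_le_integral_abs
    _ ≤ ∫ s in Ioc (0:ℝ) 1, L * ρ ^ 2 / σ * (s ^ (-3:ℝ) * min r s ^ (d:ℝ)) :=
        integral_mono_of_nonneg (.of_forall fun _ => abs_nonneg _)
          ((integrableOn_rpow_neg_three_mul_min_rpow hd hr).const_mul _)
          (ae_restrict_of_forall_mem measurableSet_Ioc fun s hs =>
            abs_T_integrand_le hL hσ hR hr hs (hQ s hs) (hQ' s hs))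
    _ ≤ L * ρ ^ 2 / σ * (r ^ ((d:ℝ) - 2) * (1 / (d - 2) + 1 / 2)) := by
        rw [integral_const_mul]
        gcongr
        exact setIntegral_rpow_neg_three_mul_min_rpow_le hd hr

theorem stmt_5_general (d : ℕ) (hd : 3 ≤ d) (m L ρ σ : ℝ) (hm : 0 < m) (hL : 0 ≤ L)
    (hσ : 0 < σ)
    (R : ℝ → ℝ) (hRlip : ∀ x y : ℝ, |R x - R y| ≤ L * |x - y|) (hR0 : R 0 = 0)
    (Q Q' : ℝ → ℝ)
    (hQ : ∀ r ∈ Ioc (0:ℝ) 1, |Q r * r ^ ((2:ℝ) - d)| ≤ ρ)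
    (hQ' : ∀ r ∈ Ioc (0:ℝ) 1, |Q' r * r ^ ((3:ℝ) - d)| ≤ ρ) :
    ∀ r ∈ Ioc (0:ℝ) 1,
      |T d m σ R Q Q' r * r ^ ((2:ℝ) - d)| ≤ L * ρ ^ 2 / (2 * σ * (d - 2)) + m := by
  intro r hr
  have hd2 : (2:ℝ) < d := by exact_mod_cast (by omega : 2 < d)
  have hR : ∀ x, |R x| ≤ L * |x| := fun x => by simpa [hR0] using hRlip x 0
  have hI := abs_T_integral_le hd2 hL hσ hR hQ hQ' hr
  have hweight : 0 < r ^ ((2:ℝ) - d) := Real.rpow_pos_of_pos hr.1 _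
  have hmr : r ^ d * r ^ ((2:ℝ) - d) ≤ 1 := by
    rw [← Real.rpow_natCast, ← Real.rpow_add hr.1, add_sub_cancel]
    exact Real.rpow_le_one hr.1.le hr.2 zero_le_two
  have hcancel : r ^ ((d:ℝ) - 2) * r ^ ((2:ℝ) - d) = 1 := by
    rw [← Real.rpow_add hr.1, sub_add_sub_cancel, sub_self, Real.rpow_zero]
  rw [T, add_mul]
  refine (abs_add_le _ _).trans ?_
  rw [abs_mul, abs_mul, abs_mul, abs_mul, abs_of_pos hm, abs_of_pos hweight,
    abs_of_nonneg (pow_nonneg hr.1.le d), abs_of_pos (one_div_pos.2 (by positivity)), mul_assoc m]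
  calc _ ≤ m * 1 + 1 / d * (L * ρ ^ 2 / σ * (r ^ ((d:ℝ) - 2) * (1 / (d - 2) + 1 / 2)))
          * r ^ ((2:ℝ) - d) := by gcongr
    _ = m + 1 / d * (L * ρ ^ 2 / σ) * (1 / (d - 2) + 1 / 2)
          * (r ^ ((d:ℝ) - 2) * r ^ ((2:ℝ) - d)) := by ring
    _ = L * ρ ^ 2 / (2 * σ * (d - 2)) + m := by
        rw [hcancel]
        field_simp [sub_ne_zero.2 hd2.ne']
        ring

theorem stmt_5 (d : ℕ) (hd : 3 ≤ d) (m L ρ σ : ℝ) (hm : 0 < m) (hL : 0 ≤ L)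
    (hρ : 0 ≤ ρ) (hσ : 0 < σ)
    (R : ℝ → ℝ) (hRlip : ∀ x y : ℝ, |R x - R y| ≤ L * |x - y|) (hR0 : R 0 = 0)
    (Q Q' : ℝ → ℝ)
    (hQdiff : ∀ r ∈ Ioc (0:ℝ) 1, HasDerivAt Q (Q' r) r)
    (hQcont : ContinuousOn Q' (Ioc (0:ℝ) 1))
    (hQ : ∀ r ∈ Ioc (0:ℝ) 1, |Q r * r ^ ((2:ℝ) - d)| ≤ ρ)
    (hQ' : ∀ r ∈ Ioc (0:ℝ) 1, |Q' r * r ^ ((3:ℝ) - d)| ≤ ρ) :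
    ∀ r ∈ Ioc (0:ℝ) 1,
      |T d m σ R Q Q' r * r ^ ((2:ℝ) - d)| ≤ L * ρ ^ 2 / (2 * σ * (d - 2)) + m :=
  stmt_5_general d hd m L ρ σ hm hL hσ R hRlip hR0 Q Q' hQ hQ'
end

section
/- Under the same hypotheses (d ≥ 3, R Lipschitz with constant L, R(0)=0, |Q|_{2-d} ≤ ρ, |Q'|_{3-d} ≤ ρ), the derivative of the operator T Q satisfies the weighted bound |(T Q)'|_{3-d} ≤ L(d+4) ρ² /(2 σ_d (d-2)) + m d. -/
open Set MeasureTheory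

/-
Splitting the integral at `r`, with `K s = R (Q' s s^{1-d} / σ) s^{1-d} Q s`,
`T Q r = m r^d + (1/d) ((1 - r^d) B r + r^d A r)`, where `B r = ∫₀^r K s^d` and
`A r = ∫_r^1 K (1 - s^d)`. On differentiating, the terms `± r^d (1 - r^d) K r` cancel, leaving
`(T Q)' r = r^{d-1} (m d + A r - B r)`. Since `R` is `L`-Lipschitz with `R 0 = 0`, the weighted
bounds on `Q` and `Q'` give `|K s| ≤ (L ρ² / σ) s^{-3}`, so `|A r| ≤ (L ρ² / 2σ) r^{-2}` and
`|B r| ≤ (L ρ² / σ (d - 2)) r^{d-2}`. Multiplying by `r^{3-d}` yields the bound with the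
constant `d / 2(d - 2) ≤ (d + 4) / 2(d - 2)`.
-/

section IntegralOverIoc

variable {f : ℝ → ℝ} {a b r : ℝ}

theorem hasDerivWithinAt_setIntegral_Ioc_right (hr : r ∈ Ioc a b)
    (hf : ContinuousOn f (Ioc a b)) (hint : IntegrableOn f (Ioc a b)) :
    HasDerivWithinAt (fun u => ∫ s in Ioc a u, f s) (f r) (Ioc a r) r := by
  have hnhds : Ioc a b ∈ nhdsWithin r (Iic r) :=
    Filter.mem_of_superset (Ioc_mem_nhdsLE hr.1) (Ioc_subset_Ioc_right hr.2)
  have hFTC : HasDerivWithinAt (fun u => ∫ s in a..u, f s) (f r) (Iic r) r :=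
    intervalIntegral.integral_hasDerivWithinAt_right
      ((intervalIntegrable_iff_integrableOn_Ioc_of_le hr.1.le).2
        (hint.mono_set (Ioc_subset_Ioc_right hr.2)))
      ⟨Ioc a b, hnhds, hf.aestronglyMeasurable measurableSet_Ioc⟩
      ((hf r hr).mono_of_mem_nhdsWithin hnhds)
  refine (hFTC.mono Ioc_subset_Iic_self).congr (fun u hu => ?_) ?_
  · exact (intervalIntegral.integral_of_le hu.1.le).symm
  · exact (intervalIntegral.integral_of_le hr.1.le).symm

theorem hasDerivWithinAt_setIntegral_Ioc_left (hr : r ∈ Ioc a b)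
    (hf : ContinuousOn f (Ioc a b)) (hint : IntegrableOn f (Ioc r b)) :
    HasDerivWithinAt (fun u => ∫ s in Ioc u b, f s) (-f r) (Ioc a r) r := by
  have hnhds : Ioc a b ∈ nhdsWithin r (Iic r) :=
    Filter.mem_of_superset (Ioc_mem_nhdsLE hr.1) (Ioc_subset_Ioc_right hr.2)
  have hFTC : HasDerivWithinAt (fun u => ∫ s in u..b, f s) (-f r) (Iic r) r :=
    intervalIntegral.integral_hasDerivWithinAt_left
      ((intervalIntegrable_iff_integrableOn_Ioc_of_le hr.2).2 hint)
      ⟨Ioc a b, hnhds, hf.aestronglyMeasurable measurableSet_Ioc⟩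
      ((hf r hr).mono_of_mem_nhdsWithin hnhds)
  refine (hFTC.mono Ioc_subset_Iic_self).congr (fun u hu => ?_) ?_
  · exact (intervalIntegral.integral_of_le (hu.2.trans hr.2)).symm
  · exact (intervalIntegral.integral_of_le hr.2).symm

theorem abs_setIntegral_Ioc_le_of_abs_le_rpow {C p : ℝ} (hab : a ≤ b)
    (hp : 0 ≤ p ∨ 0 ∉ uIcc a b) (hp₁ : p ≠ -1) (hf : ∀ s ∈ Ioc a b, |f s| ≤ C * s ^ p) :
    |∫ s in Ioc a b, f s| ≤ C * ((b ^ (p + 1) - a ^ (p + 1)) / (p + 1)) := by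
  rw [← intervalIntegral.integral_of_le hab,
    ← integral_rpow (hp.imp (fun h => by linarith) (⟨hp₁, ·⟩)),
    ← intervalIntegral.integral_const_mul]
  exact intervalIntegral.norm_integral_le_of_norm_le (f := f) hab (.of_forall hf)
    ((intervalIntegral.intervalIntegrable_rpow hp).const_mul C)

end IntegralOverIoc

section Green

variable {d : ℕ} {K : ℝ → ℝ}

theorem integral_mul_G_eq {x : ℝ} (hx₀ : 0 ≤ x) (hx₁ : x ≤ 1)
    (hlow : IntegrableOn (fun s => K s * s ^ d) (Ioc 0 x))
    (hup : IntegrableOn (fun s => K s * (1 - s ^ d)) (Ioc x 1)) :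
    ∫ s in Ioc (0:ℝ) 1, K s * G d x s =
      (1 - x ^ d) * (∫ s in Ioc (0:ℝ) x, K s * s ^ d)
        + x ^ d * ∫ s in Ioc x 1, K s * (1 - s ^ d) := by
  have hlowG : EqOn (fun s => K s * G d x s) (fun s => K s * s ^ d * (1 - x ^ d)) (Ioc 0 x) := by
    intro s hs
    rcases hs.2.lt_or_eq with hsx | rfl
    · simp [G, hsx.not_ge, mul_assoc]
    · simp [G, mul_assoc]
  have hupG : EqOn (fun s => K s * G d x s) (fun s => K s * (1 - s ^ d) * x ^ d) (Ioc x 1) := by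
    intro s hs
    simp only [G, if_pos hs.1.le]
    ring
  rw [← Ioc_union_Ioc_eq_Ioc hx₀ hx₁, setIntegral_union (Ioc_disjoint_Ioc_of_le le_rfl)
      measurableSet_Ioc (IntegrableOn.congr_fun (hlow.mul_const _) hlowG.symm measurableSet_Ioc)
      (IntegrableOn.congr_fun (hup.mul_const _) hupG.symm measurableSet_Ioc),
    setIntegral_congr_fun measurableSet_Ioc hlowG, setIntegral_congr_fun measurableSet_Ioc hupG,
    integral_mul_const, integral_mul_const, mul_comm, mul_comm (∫ s in Ioc x 1, _)]

/- The derivative is taken from the left because the splitting formula `integral_mul_G_eq`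
only holds for `x ≤ 1`, and `r = 1` is allowed. -/
theorem hasDerivWithinAt_integral_mul_G {r : ℝ} (hr : r ∈ Ioc (0:ℝ) 1)
    (hK : ContinuousOn K (Ioc 0 1)) (hint : IntegrableOn (fun s => K s * s ^ d) (Ioc 0 1)) :
    HasDerivWithinAt (fun x => ∫ s in Ioc (0:ℝ) 1, K s * G d x s)
      (d * r ^ (d - 1) * ((∫ s in Ioc r 1, K s * (1 - s ^ d)) - ∫ s in Ioc 0 r, K s * s ^ d))
      (Ioc 0 r) r := by
  have hupCont : ContinuousOn (fun s => K s * (1 - s ^ d)) (Ioc 0 1) := by fun_prop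
  have hupInt : ∀ x ∈ Ioc (0:ℝ) 1, IntegrableOn (fun s => K s * (1 - s ^ d)) (Ioc x 1) :=
    fun x hx => ((hupCont.mono fun s hs => ⟨hx.1.trans_le hs.1, hs.2⟩).integrableOn_Icc).mono_set
      Ioc_subset_Icc_self
  have hB := hasDerivWithinAt_setIntegral_Ioc_right hr (by fun_prop) hint
  have hA := hasDerivWithinAt_setIntegral_Ioc_left hr hupCont (hupInt r hr)
  have hpow : HasDerivWithinAt (fun x : ℝ => x ^ d) (d * r ^ (d - 1)) (Ioc 0 r) r :=
    (hasDerivAt_pow d r).hasDerivWithinAt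
  refine (((hpow.const_sub 1).mul hB).add (hpow.mul hA)).congr_deriv ?_
    |>.congr_of_mem (fun x hx => ?_) ⟨hr.1, le_rfl⟩
  · ring
  · have hx1 : x ≤ 1 := hx.2.trans hr.2
    exact integral_mul_G_eq hx.1.le hx1 (hint.mono_set (Ioc_subset_Ioc_right hx1))
      (hupInt x ⟨hx.1, hx1⟩)

end Green

section CubicSingularity

variable {d : ℕ} {K : ℝ → ℝ} {C : ℝ}

theorem abs_mul_pow_le_of_abs_le_rpow {s : ℝ} (hs : 0 < s) (hK : |K s| ≤ C * s ^ (-3:ℝ)) :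
    |K s * s ^ d| ≤ C * s ^ ((d:ℝ) - 3) := by
  rw [abs_mul, abs_of_pos (pow_pos hs d), ← Real.rpow_natCast, sub_eq_neg_add,
    Real.rpow_add hs, ← mul_assoc]
  exact mul_le_mul_of_nonneg_right hK (by positivity)

theorem abs_mul_one_sub_pow_le_of_abs_le_rpow {s : ℝ} (hs : s ∈ Ioc (0:ℝ) 1)
    (hK : |K s| ≤ C * s ^ (-3:ℝ)) : |K s * (1 - s ^ d)| ≤ C * s ^ (-3:ℝ) := by
  have hpow : s ^ d ≤ 1 := pow_le_one₀ hs.1.le hs.2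
  rw [abs_mul, abs_of_nonneg (sub_nonneg.2 hpow)]
  exact (mul_le_of_le_one_right (abs_nonneg _) (by linarith [pow_nonneg hs.1.le d])).trans hK

theorem nonneg_of_forall_abs_le_mul_rpow (hK : ∀ s ∈ Ioc (0:ℝ) 1, |K s| ≤ C * s ^ (-3:ℝ)) :
    0 ≤ C := by
  simpa using (abs_nonneg _).trans (hK 1 ⟨one_pos, le_rfl⟩)

theorem integrableOn_mul_pow (hK : ∀ s ∈ Ioc (0:ℝ) 1, |K s| ≤ C * s ^ (-3:ℝ)) (hd : 3 ≤ d)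
    (hKc : ContinuousOn K (Ioc 0 1)) :
    IntegrableOn (fun s => K s * s ^ d) (Ioc 0 1) := by
  refine Integrable.mono' (integrableOn_const (C := C) measure_Ioc_lt_top.ne)
    ((hKc.mul (continuous_pow d).continuousOn).aestronglyMeasurable measurableSet_Ioc) ?_
  filter_upwards [ae_restrict_mem measurableSet_Ioc] with s hs
  calc ‖K s * s ^ d‖ ≤ C * s ^ ((d:ℝ) - 3) := abs_mul_pow_le_of_abs_le_rpow hs.1 (hK s hs)
    _ ≤ C * 1 := by
      have hC := nonneg_of_forall_abs_le_mul_rpow hK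
      gcongr
      exact Real.rpow_le_one hs.1.le hs.2 (by rw [sub_nonneg]; exact_mod_cast hd)
    _ = C := mul_one C

theorem sq_mul_abs_integral_sub_integral_le (hK : ∀ s ∈ Ioc (0:ℝ) 1, |K s| ≤ C * s ^ (-3:ℝ))
    (hd : 3 ≤ d) {r : ℝ} (hr : r ∈ Ioc (0:ℝ) 1) :
    r ^ 2 * |(∫ s in Ioc r 1, K s * (1 - s ^ d)) - ∫ s in Ioc 0 r, K s * s ^ d|
      ≤ C * d / (2 * (d - 2)) := by
  have hd' : (3:ℝ) ≤ d := by exact_mod_cast hd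
  have hC := nonneg_of_forall_abs_le_mul_rpow hK
  have hup := abs_setIntegral_Ioc_le_of_abs_le_rpow (f := fun s => K s * (1 - s ^ d)) hr.2
    (Or.inr fun h => by linarith [(uIcc_of_le hr.2 ▸ h).1, hr.1]) (by norm_num)
    fun s hs => abs_mul_one_sub_pow_le_of_abs_le_rpow ⟨hr.1.trans hs.1, hs.2⟩
      (hK s ⟨hr.1.trans hs.1, hs.2⟩)
  have hlow := abs_setIntegral_Ioc_le_of_abs_le_rpow (f := fun s => K s * s ^ d) hr.1.le
    (Or.inl (by linarith)) (by linarith)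
    fun s hs => abs_mul_pow_le_of_abs_le_rpow hs.1 (hK s ⟨hs.1, hs.2.trans hr.2⟩)
  rw [show (-3:ℝ) + 1 = -2 by norm_num, Real.rpow_neg hr.1.le, Real.one_rpow, Real.rpow_two]
    at hup
  rw [show (d:ℝ) - 3 + 1 = d - 2 by ring, Real.zero_rpow (by linarith), sub_zero,
    Real.rpow_sub hr.1, Real.rpow_natCast, Real.rpow_two] at hlow
  have hd₂ : (0:ℝ) < d - 2 := by linarith
  have hr₀ : r ≠ 0 := hr.1.ne'
  calc r ^ 2 * |(∫ s in Ioc r 1, K s * (1 - s ^ d)) - ∫ s in Ioc 0 r, K s * s ^ d|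
      ≤ r ^ 2 * (C * ((1 - (r ^ 2)⁻¹) / -2) + C * (r ^ d / r ^ 2 / (d - 2))) := by
        gcongr
        exact (abs_sub _ _).trans (add_le_add hup hlow)
    _ = C * (1 - r ^ 2) / 2 + C * r ^ d / (d - 2) := by field_simp; ring
    _ ≤ C / 2 + C / (d - 2) := by
        gcongr
        · exact mul_le_of_le_one_right hC (by linarith [sq_nonneg r])
        · exact mul_le_of_le_one_right hC (pow_le_one₀ hr.1.le hr.2)
    _ = C * d / (2 * (d - 2)) := by field_simp; ring

end CubicSingularity

noncomputable def kernel (d : ℕ) (σ : ℝ) (R Q Q' : ℝ → ℝ) (s : ℝ) : ℝ :=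
  R (Q' s * s ^ ((1:ℝ) - d) * σ⁻¹) * s ^ ((1:ℝ) - d) * Q s

section Kernel

variable {d : ℕ} {σ : ℝ} {R Q Q' : ℝ → ℝ}

theorem abs_kernel_le {L ρ s : ℝ} (hs : 0 < s) (hL : 0 ≤ L) (hσ : 0 < σ)
    (hRlip : ∀ x y : ℝ, |R x - R y| ≤ L * |x - y|) (hR0 : R 0 = 0)
    (hQ : |Q s * s ^ ((2:ℝ) - d)| ≤ ρ) (hQ' : |Q' s * s ^ ((3:ℝ) - d)| ≤ ρ) :
    |kernel d σ R Q Q' s| ≤ L * ρ ^ 2 / σ * s ^ (-3:ℝ) := by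
  have hρ : 0 ≤ ρ := (abs_nonneg _).trans hQ
  have hR : ∀ y, |R y| ≤ L * |y| := fun y => by simpa [hR0] using hRlip y 0
  have hQ's : |Q' s * s ^ ((1:ℝ) - d)| = |Q' s * s ^ ((3:ℝ) - d)| * s ^ (-2:ℝ) := by
    rw [← abs_of_pos (Real.rpow_pos_of_pos hs (-2)), ← abs_mul, mul_assoc, ← Real.rpow_add hs]
    ring_nf
  have hQs : |Q s * s ^ ((1:ℝ) - d)| = |Q s * s ^ ((2:ℝ) - d)| * s ^ (-1:ℝ) := by
    rw [← abs_of_pos (Real.rpow_pos_of_pos hs (-1)), ← abs_mul, mul_assoc, ← Real.rpow_add hs]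
    ring_nf
  calc |kernel d σ R Q Q' s|
      = |R (Q' s * s ^ ((1:ℝ) - d) * σ⁻¹)| * |Q s * s ^ ((1:ℝ) - d)| := by
        rw [kernel, mul_assoc, abs_mul, mul_comm (s ^ _)]
    _ ≤ L * (|Q' s * s ^ ((1:ℝ) - d)| * σ⁻¹) * |Q s * s ^ ((1:ℝ) - d)| := by
        gcongr
        exact (hR _).trans_eq (by rw [abs_mul, abs_of_pos (inv_pos.2 hσ)])
    _ ≤ L * (ρ * s ^ (-2:ℝ) * σ⁻¹) * (ρ * s ^ (-1:ℝ)) := by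
        rw [hQ's, hQs]
        gcongr
    _ = L * ρ ^ 2 / σ * s ^ (-3:ℝ) := by
        rw [show (-3:ℝ) = -2 + -1 by norm_num, Real.rpow_add hs]
        ring

theorem continuousOn_kernel {S : Set ℝ} (hS : ∀ s ∈ S, s ≠ 0) (hR : Continuous R)
    (hQ : ContinuousOn Q S) (hQ' : ContinuousOn Q' S) : ContinuousOn (kernel d σ R Q Q') S := by
  have hpow : ContinuousOn (fun s : ℝ => s ^ ((1:ℝ) - d)) S := fun s hs =>
    (Real.continuousAt_rpow_const s _ (Or.inl (hS s hs))).continuousWithinAt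
  exact ((hR.comp_continuousOn ((hQ'.mul hpow).mul continuousOn_const)).mul hpow).mul hQ

end Kernel

theorem hasDerivWithinAt_T {d : ℕ} {m σ r : ℝ} {R Q Q' : ℝ → ℝ} (hd : d ≠ 0)
    (hr : r ∈ Ioc (0:ℝ) 1) (hKc : ContinuousOn (kernel d σ R Q Q') (Ioc 0 1))
    (hint : IntegrableOn (fun s => kernel d σ R Q Q' s * s ^ d) (Ioc 0 1)) :
    HasDerivWithinAt (T d m σ R Q Q')
      (r ^ (d - 1) * (m * d + ((∫ s in Ioc r 1, kernel d σ R Q Q' s * (1 - s ^ d))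
        - ∫ s in Ioc 0 r, kernel d σ R Q Q' s * s ^ d))) (Ioc 0 r) r := by
  have hd' : (d:ℝ) ≠ 0 := Nat.cast_ne_zero.2 hd
  refine (((hasDerivAt_pow d r).hasDerivWithinAt.const_mul m).add
    ((hasDerivWithinAt_integral_mul_G hr hKc hint).const_mul (1 / (d:ℝ)))).congr_deriv ?_
  field_simp

theorem abs_pow_sub_one_mul_mul_rpow_three_sub_le {d : ℕ} {r m x c : ℝ} (hd : 1 ≤ d)
    (hr : r ∈ Ioc (0:ℝ) 1) (hm : 0 ≤ m) (hx : r ^ 2 * |x| ≤ c) :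
    |r ^ (d - 1) * (m * d + x) * r ^ ((3:ℝ) - d)| ≤ m * d + c := by
  have hpow : r ^ (d - 1) * r ^ ((3:ℝ) - d) = r ^ 2 := by
    rw [← Real.rpow_natCast, Nat.cast_sub hd, ← Real.rpow_add hr.1, ← Real.rpow_natCast]
    norm_num
  have hmd : 0 ≤ m * d := by positivity
  rw [mul_right_comm, hpow, abs_mul, abs_of_nonneg (sq_nonneg r)]
  calc r ^ 2 * |m * d + x| ≤ r ^ 2 * (m * d + |x|) := by
        gcongr
        exact (abs_add_le _ _).trans_eq (by rw [abs_of_nonneg hmd])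
    _ = r ^ 2 * (m * d) + r ^ 2 * |x| := mul_add _ _ _
    _ ≤ m * d + c := add_le_add (mul_le_of_le_one_left hmd (pow_le_one₀ hr.1.le hr.2)) hx

theorem stmt_6_general (d : ℕ) (hd : 3 ≤ d) (m L ρ σ : ℝ) (hm : 0 < m) (hL : 0 ≤ L)
    (hσ : 0 < σ)
    (R : ℝ → ℝ) (hRlip : ∀ x y : ℝ, |R x - R y| ≤ L * |x - y|) (hR0 : R 0 = 0)
    (Q Q' D : ℝ → ℝ)
    (hQdiff : ∀ r ∈ Ioc (0:ℝ) 1, HasDerivAt Q (Q' r) r)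
    (hQcont : ContinuousOn Q' (Ioc (0:ℝ) 1))
    (hQ : ∀ r ∈ Ioc (0:ℝ) 1, |Q r * r ^ ((2:ℝ) - d)| ≤ ρ)
    (hQ' : ∀ r ∈ Ioc (0:ℝ) 1, |Q' r * r ^ ((3:ℝ) - d)| ≤ ρ)
    (hTdiff : ∀ r ∈ Ioc (0:ℝ) 1, HasDerivAt (T d m σ R Q Q') (D r) r) :
    ∀ r ∈ Ioc (0:ℝ) 1,
      |D r * r ^ ((3:ℝ) - d)| ≤ L * (d + 4) * ρ ^ 2 / (2 * σ * (d - 2)) + m * d := by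
  intro r hr
  have hK : ∀ s ∈ Ioc (0:ℝ) 1, |kernel d σ R Q Q' s| ≤ L * ρ ^ 2 / σ * s ^ (-3:ℝ) :=
    fun s hs => abs_kernel_le hs.1 hL hσ hRlip hR0 (hQ s hs) (hQ' s hs)
  have hRc : Continuous R := (LipschitzWith.of_dist_le_mul (K := L.toNNReal) fun x y => by
    simpa [Real.dist_eq, hL] using hRlip x y).continuous
  have hKc : ContinuousOn (kernel d σ R Q Q') (Ioc 0 1) := continuousOn_kernel
    (fun s hs => hs.1.ne') hRc (fun s hs => (hQdiff s hs).continuousAt.continuousWithinAt) hQcont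
  rw [(uniqueDiffOn_Ioc 0 r r ⟨hr.1, le_rfl⟩).eq_deriv _ (hTdiff r hr).hasDerivWithinAt
    (hasDerivWithinAt_T (by omega) hr hKc (integrableOn_mul_pow hK hd hKc))]
  refine (abs_pow_sub_one_mul_mul_rpow_three_sub_le (by omega) hr hm.le
    (sq_mul_abs_integral_sub_integral_le hK hd hr)).trans ?_
  have hd₂ : (0:ℝ) < d - 2 := by
    have : (3:ℝ) ≤ d := by exact_mod_cast hd
    linarith
  rw [add_comm, show L * (d + 4) * ρ ^ 2 / (2 * σ * (d - 2))
      = L * ρ ^ 2 / σ * (d + 4) / (2 * (d - 2)) by field_simp]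
  gcongr
  linarith

theorem stmt_6 (d : ℕ) (hd : 3 ≤ d) (m L ρ σ : ℝ) (hm : 0 < m) (hL : 0 ≤ L)
    (hρ : 0 ≤ ρ) (hσ : 0 < σ)
    (R : ℝ → ℝ) (hRlip : ∀ x y : ℝ, |R x - R y| ≤ L * |x - y|) (hR0 : R 0 = 0)
    (Q Q' D : ℝ → ℝ)
    (hQdiff : ∀ r ∈ Ioc (0:ℝ) 1, HasDerivAt Q (Q' r) r)
    (hQcont : ContinuousOn Q' (Ioc (0:ℝ) 1))
    (hQ : ∀ r ∈ Ioc (0:ℝ) 1, |Q r * r ^ ((2:ℝ) - d)| ≤ ρ)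
    (hQ' : ∀ r ∈ Ioc (0:ℝ) 1, |Q' r * r ^ ((3:ℝ) - d)| ≤ ρ)
    (hTdiff : ∀ r ∈ Ioc (0:ℝ) 1, HasDerivAt (T d m σ R Q Q') (D r) r) :
    ∀ r ∈ Ioc (0:ℝ) 1,
      |D r * r ^ ((3:ℝ) - d)| ≤ L * (d + 4) * ρ ^ 2 / (2 * σ * (d - 2)) + m * d :=
  stmt_6_general d hd m L ρ σ hm hL hσ R hRlip hR0 Q Q' D hQdiff hQcont hQ hQ' hTdiff
end

section
/- Let d ≥ 3, R Lipschitz with constant L and R(0) = 0, σ_d > 0. There exists m₀ > 0 such that for every m ∈ (0, m₀), the singular boundary value problem −Q'' + (d-1) r^{-1} Q' = R(Q' r^{1-d} σ_d^{-1}) Q on (0,1), Q(0) = 0, Q(1) = m, has at least one solution Q ∈ C¹((0,1]) with sup_r |Q(r) r^{2-d}| and sup_r |Q'(r) r^{3-d}| finite. -/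
/-!
With `f x = R (x σ⁻¹)` and `P = Q' r ^ (1 - d)` the equation reads `P' = -r ^ (1 - d) f(P) Q`,
so `P(r) = P(1) + ∫ r..1 r ^ (1 - d) f(P) Q`, and `Q(1) = m` fixes `P(1)`. In the weighted norm
`sup |r ^ (3 - d) Q'|` (which controls `|Q| ≤ ‖·‖ r ^ (d - 2)`), the integral term is quadratic:
it is bounded by `K ‖·‖²` and `K ρ`-Lipschitz on the ball of radius `ρ`, where `K` is the
Lipschitz constant of `f`, while the boundary datum contributes the term `d m r ^ 2`. So for
small `m` the resulting map is a `1/2`-contraction of the ball of radius `2 d m` into itself,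
and its fixed point is the solution.
-/

open Set MeasureTheory intervalIntegral Metric Function
open scoped NNReal BoundedContinuousFunction Interval

theorem intervalIntegrable_of_continuousOn_Ioc_of_abs_le {f : ℝ → ℝ} {a b C : ℝ} (hab : a ≤ b)
    (hf : ContinuousOn f (Ioc a b)) (hC : ∀ x ∈ Ioc a b, |f x| ≤ C) :
    IntervalIntegrable f volume a b := by
  rw [intervalIntegrable_iff_integrableOn_Ioc_of_le hab]
  refine IntegrableOn.of_bound measure_Ioc_lt_top (hf.aestronglyMeasurable measurableSet_Ioc) C ?_
  filter_upwards [ae_restrict_mem measurableSet_Ioc] with x hx using hC x hx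

theorem integral_inv_pow_three {r : ℝ} (hr : 0 < r) (hr1 : r ≤ 1) :
    ∫ s in r..1, (s ^ 3)⁻¹ = ((r ^ 2)⁻¹ - 1) / 2 := by
  have hzero : (0 : ℝ) ∉ [[r, 1]] := by
    rw [uIcc_of_le hr1]; exact fun h => hr.not_ge h.1
  simp_rw [← zpow_natCast, ← zpow_neg]
  rw [integral_zpow (Or.inr ⟨by norm_num, hzero⟩)]
  norm_num
  ring

theorem abs_integral_le_of_abs_le_inv_pow_three {h : ℝ → ℝ} {r C : ℝ} (hr : 0 < r) (hr1 : r ≤ 1)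
    (hC : 0 ≤ C) (hh : ∀ s ∈ Ioc r 1, |h s| ≤ C * (s ^ 3)⁻¹) :
    |∫ s in r..1, h s| ≤ C / 2 * (r ^ 2)⁻¹ := by
  have hint : IntervalIntegrable (fun s : ℝ => C * (s ^ 3)⁻¹) volume r 1 := by
    refine ContinuousOn.intervalIntegrable
      (continuousOn_const.mul ((continuousOn_id.pow 3).inv₀ ?_))
    rw [uIcc_of_le hr1]
    exact fun s hs => pow_ne_zero 3 (hr.trans_le hs.1).ne'
  have hle : ‖∫ s in r..1, h s‖ ≤ |∫ s in r..1, C * (s ^ 3)⁻¹| := by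
    refine norm_integral_le_abs_of_norm_le ?_ hint
    rw [uIoc_of_le hr1]
    filter_upwards [ae_restrict_mem measurableSet_Ioc] with s hs using hh s hs
  have hr2 : 1 ≤ (r ^ 2)⁻¹ := one_le_inv₀ (by positivity) |>.2 (pow_le_one₀ hr.le hr1)
  rw [intervalIntegral.integral_const_mul, integral_inv_pow_three hr hr1,
    abs_of_nonneg (by positivity)] at hle
  calc |∫ s in r..1, h s| ≤ C * (((r ^ 2)⁻¹ - 1) / 2) := hle
    _ ≤ C / 2 * (r ^ 2)⁻¹ := by nlinarith

theorem abs_pow_mul_le_of_abs_le_mul_inv_sq {d : ℕ} {s x C : ℝ} (hd : 3 ≤ d)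
    (hs : s ∈ Ioc (0 : ℝ) 1) (hx : |x| ≤ C * (s ^ 2)⁻¹) : |s ^ (d - 1) * x| ≤ C := by
  have hC : 0 ≤ C * (s ^ 2)⁻¹ := (abs_nonneg _).trans hx
  have hpow : s ^ (d - 1) * (s ^ 2)⁻¹ = s ^ (d - 3) := by
    rw [show d - 1 = d - 3 + 2 by omega, pow_add, mul_inv_cancel_right₀ (by positivity [hs.1])]
  calc |s ^ (d - 1) * x| = s ^ (d - 1) * |x| := by
        rw [abs_mul, abs_of_nonneg (pow_nonneg hs.1.le _)]
    _ ≤ s ^ (d - 1) * (C * (s ^ 2)⁻¹) := mul_le_mul_of_nonneg_left hx (by positivity [hs.1])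
    _ = C * s ^ (d - 3) := by rw [mul_left_comm, hpow]
    _ ≤ C := mul_le_of_le_one_right (nonneg_of_mul_nonneg_left hC (by positivity [hs.1]))
            (pow_le_one₀ hs.1.le hs.2)

theorem rpow_natCast_sub_natCast {r : ℝ} (hr : 0 < r) {a n : ℕ} (h : a ≤ n) :
    r ^ ((a : ℝ) - n) = (r ^ (n - a))⁻¹ := by
  rw [← Real.rpow_natCast r (n - a), ← Real.rpow_neg hr.le, Nat.cast_sub h, neg_sub]

theorem exists_isFixedPt_of_lipschitzOnWith_closedBall {α : Type*} [MetricSpace α]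
    [CompleteSpace α] {T : α → α} {k : ℝ≥0} {x₀ : α} {ρ : ℝ} (hk : k < 1)
    (hT : LipschitzOnWith k T (closedBall x₀ ρ)) (hx₀ : dist (T x₀) x₀ ≤ (1 - k) * ρ) :
    ∃ x ∈ closedBall x₀ ρ, IsFixedPt T x := by
  have hρ : 0 ≤ ρ := nonneg_of_mul_nonneg_right (dist_nonneg.trans hx₀) (by linarith)
  have hmaps : MapsTo T (closedBall x₀ ρ) (closedBall x₀ ρ) := fun x hx => by
    rw [mem_closedBall] at hx ⊢
    calc dist (T x) x₀ ≤ dist (T x) (T x₀) + dist (T x₀) x₀ := dist_triangle _ _ _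
      _ ≤ k * dist x x₀ + (1 - k) * ρ :=
          add_le_add (hT.dist_le_mul x hx x₀ (mem_closedBall_self hρ)) hx₀
      _ ≤ k * ρ + (1 - k) * ρ := by gcongr
      _ = ρ := by ring
  obtain ⟨x, hx, hfix, -⟩ := ContractingWith.exists_fixedPoint' isClosed_closedBall.isComplete
    hmaps ⟨hk, hT.mapsToRestrict hmaps⟩ (mem_closedBall_self hρ) (edist_ne_top _ _)
  exact ⟨x, hx, hfix⟩

namespace RadialBVP

variable (d : ℕ) (f : ℝ → ℝ)

/-- The unknown of the weighted C¹ space is encoded in logarithmic coordinates: `w : ℝ →ᵇ ℝ`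
stands for `Q' r = r ^ (d - 3) * w (log r)` on `(0, 1]`, so the weighted sup norm of `Q'` is
`‖w‖` restricted to `(-∞, 0]`. -/
noncomputable def radialDeriv (w : ℝ →ᵇ ℝ) (r : ℝ) : ℝ :=
  r ^ (d - 3) * w (Real.log r)

noncomputable def radialProfile (w : ℝ →ᵇ ℝ) (r : ℝ) : ℝ :=
  ∫ t in (0 : ℝ)..r, radialDeriv d w t

/-- With `P = Q' r ^ (1 - d) = w (log r) / r ^ 2` the equation reads `P' = -r ^ (1 - d) f(P) Q`,
so `P = P 1 + flux`. -/
noncomputable def fluxDensity (w : ℝ →ᵇ ℝ) (s : ℝ) : ℝ :=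
  (s ^ (d - 1))⁻¹ * (f (w (Real.log s) * (s ^ 2)⁻¹) * radialProfile d w s)

noncomputable def flux (w : ℝ →ᵇ ℝ) (r : ℝ) : ℝ :=
  ∫ s in r..1, fluxDensity d f w s

noncomputable def fluxMoment (w : ℝ →ᵇ ℝ) : ℝ :=
  ∫ s in (0 : ℝ)..1, s ^ (d - 1) * flux d f w s

/-- `r ^ (3 - d) Q' = r ^ 2 P` for `P = c + flux`, where `c = d (m - fluxMoment)` is forced by
`Q 1 = ∫ 0..1 r ^ (d - 1) P = c / d + fluxMoment = m`. -/
noncomputable def picardMap (m : ℝ) (w : ℝ →ᵇ ℝ) (r : ℝ) : ℝ :=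
  d * (m - fluxMoment d f w) * r ^ 2 + r ^ 2 * flux d f w r

noncomputable def radialSecondDeriv (w : ℝ →ᵇ ℝ) (r : ℝ) : ℝ :=
  (d - 1) * r⁻¹ * radialDeriv d w r
    - f (radialDeriv d w r * r ^ ((1 : ℝ) - d)) * radialProfile d w r

variable {d f} {w w₁ w₂ : ℝ →ᵇ ℝ} {K : ℝ≥0} {m ρ r s : ℝ}

theorem continuousOn_radialDeriv : ContinuousOn (radialDeriv d w) (Ioi 0) :=
  (continuousOn_pow _).mul (w.continuous.comp_continuousOn
    (Real.continuousOn_log.mono fun _ hx => ne_of_gt hx))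

theorem abs_radialDeriv_le (hs : 0 ≤ s) : |radialDeriv d w s| ≤ ‖w‖ * s ^ (d - 3) := by
  rw [radialDeriv, abs_mul, abs_pow, abs_of_nonneg hs, mul_comm]
  gcongr
  exact w.norm_coe_le_norm _

theorem intervalIntegrable_radialDeriv (hs : 0 ≤ s) :
    IntervalIntegrable (radialDeriv d w) volume 0 s :=
  intervalIntegrable_of_continuousOn_Ioc_of_abs_le (C := ‖w‖ * s ^ (d - 3)) hs
    (continuousOn_radialDeriv.mono fun _ ht => ht.1)
    fun t ht => (abs_radialDeriv_le ht.1.le).trans (by gcongr; exacts [ht.1.le, ht.2])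

theorem hasDerivAt_radialProfile (hr : 0 < r) :
    HasDerivAt (radialProfile d w) (radialDeriv d w r) r :=
  integral_hasDerivAt_right (intervalIntegrable_radialDeriv hr.le)
    (continuousOn_radialDeriv.stronglyMeasurableAtFilter isOpen_Ioi r hr)
    (continuousOn_radialDeriv.continuousAt (Ioi_mem_nhds hr))

theorem continuousOn_radialProfile : ContinuousOn (radialProfile d w) (Icc 0 1) := by
  have hint := (intervalIntegrable_radialDeriv (d := d) (w := w) zero_le_one).def'
  rw [uIoc_of_le zero_le_one, ← integrableOn_Icc_iff_integrableOn_Ioc] at hint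
  rw [← uIcc_of_le zero_le_one] at hint ⊢
  exact continuousOn_primitive_interval hint

theorem radialProfile_sub (hs : 0 ≤ s) :
    radialProfile d (w₁ - w₂) s = radialProfile d w₁ s - radialProfile d w₂ s := by
  rw [radialProfile, radialProfile, radialProfile, ← integral_sub
    (intervalIntegrable_radialDeriv hs) (intervalIntegrable_radialDeriv hs)]
  simp only [radialDeriv, BoundedContinuousFunction.coe_sub, Pi.sub_apply, mul_sub]

@[simp]
theorem radialProfile_zero : radialProfile d 0 = 0 := by
  ext; simp [radialProfile, radialDeriv]

theorem abs_radialProfile_le (hd : 3 ≤ d) (hs : 0 ≤ s) :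
    |radialProfile d w s| ≤ ‖w‖ * s ^ (d - 2) := by
  have hle : ‖∫ t in (0 : ℝ)..s, radialDeriv d w t‖ ≤ |∫ t in (0 : ℝ)..s, ‖w‖ * t ^ (d - 3)| := by
    refine norm_integral_le_abs_of_norm_le ?_
      ((continuous_const.mul (continuous_pow _)).intervalIntegrable _ _)
    rw [uIoc_of_le hs]
    filter_upwards [ae_restrict_mem measurableSet_Ioc] with t ht using abs_radialDeriv_le ht.1.le
  have hd' : ((d - 3 : ℕ) : ℝ) + 1 = d - 2 := by push_cast [Nat.cast_sub hd]; ring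
  have hd2 : (1 : ℝ) ≤ d - 2 := by
    have : (3 : ℝ) ≤ d := by exact_mod_cast hd
    linarith
  have hpow := pow_nonneg hs (d - 2)
  rw [intervalIntegral.integral_const_mul, integral_pow, show d - 3 + 1 = d - 2 by omega, hd',
    zero_pow (by omega), sub_zero, abs_of_nonneg (by positivity)] at hle
  exact hle.trans (mul_le_mul_of_nonneg_left (div_le_self hpow hd2) (norm_nonneg w))

theorem continuousOn_fluxDensity (hf : Continuous f) :
    ContinuousOn (fluxDensity d f w) (Ioi 0) := by
  have hlog : ContinuousOn (fun s => w (Real.log s)) (Ioi 0) :=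
    w.continuous.comp_continuousOn (Real.continuousOn_log.mono fun _ hx => ne_of_gt hx)
  have hinv : ∀ n, ContinuousOn (fun s : ℝ => (s ^ n)⁻¹) (Ioi 0) := fun n =>
    (continuousOn_pow n).inv₀ fun _ hx => pow_ne_zero _ (ne_of_gt hx)
  refine (hinv _).mul (ContinuousOn.mul (hf.comp_continuousOn ((hlog.mul (hinv 2)))) ?_)
  exact fun x hx => (hasDerivAt_radialProfile hx).continuousAt.continuousWithinAt

@[simp]
theorem fluxDensity_zero : fluxDensity d f 0 = 0 := by
  ext; simp [fluxDensity]

theorem abs_fluxDensity_sub_le (hd : 3 ≤ d) (hf : LipschitzWith K f) (hf0 : f 0 = 0)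
    (hw₁ : ‖w₁‖ ≤ ρ) (hw₂ : ‖w₂‖ ≤ ρ) (hs : 0 < s) :
    |fluxDensity d f w₁ s - fluxDensity d f w₂ s| ≤ 2 * K * ρ * ‖w₁ - w₂‖ * (s ^ 3)⁻¹ := by
  set a₁ := w₁ (Real.log s) * (s ^ 2)⁻¹
  set a₂ := w₂ (Real.log s) * (s ^ 2)⁻¹
  set Q₁ := radialProfile d w₁ s
  set Q₂ := radialProfile d w₂ s
  have hlip : ∀ x y, |f x - f y| ≤ K * |x - y| := fun x y => by
    simpa [Real.dist_eq] using hf.dist_le_mul x y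
  have hs2 : 0 < (s ^ 2)⁻¹ := by positivity
  have hfa : |f a₁ - f a₂| ≤ K * (‖w₁ - w₂‖ * (s ^ 2)⁻¹) := by
    refine (hlip a₁ a₂).trans (mul_le_mul_of_nonneg_left ?_ K.2)
    rw [← sub_mul, abs_mul, abs_of_pos hs2, ← BoundedContinuousFunction.sub_apply]
    exact mul_le_mul_of_nonneg_right ((w₁ - w₂).norm_coe_le_norm _) hs2.le
  have hfa₂ : |f a₂| ≤ K * (ρ * (s ^ 2)⁻¹) := by
    have h0 : |f a₂| ≤ K * |a₂| := by simpa [hf0] using hlip a₂ 0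
    refine h0.trans (mul_le_mul_of_nonneg_left ?_ K.2)
    rw [abs_mul, abs_of_pos hs2]
    exact mul_le_mul_of_nonneg_right ((w₂.norm_coe_le_norm _).trans hw₂) hs2.le
  have hQ₁ : |Q₁| ≤ ρ * s ^ (d - 2) :=
    (abs_radialProfile_le hd hs.le).trans (by gcongr)
  have hQ : |Q₁ - Q₂| ≤ ‖w₁ - w₂‖ * s ^ (d - 2) := by
    rw [← radialProfile_sub hs.le]; exact abs_radialProfile_le hd hs.le
  have hpow : (s ^ (d - 1))⁻¹ * ((s ^ 2)⁻¹ * s ^ (d - 2)) = (s ^ 3)⁻¹ := by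
    have hsplit : s ^ (d - 1) = s ^ 3 * s ^ (d - 2) * (s ^ 2)⁻¹ := by
      rw [← pow_add, show 3 + (d - 2) = d - 1 + 2 by omega, pow_add,
        mul_inv_cancel_right₀ (by positivity)]
    rw [hsplit]
    field_simp
  calc |fluxDensity d f w₁ s - fluxDensity d f w₂ s|
      = (s ^ (d - 1))⁻¹ * |(f a₁ - f a₂) * Q₁ + f a₂ * (Q₁ - Q₂)| := by
        rw [fluxDensity, fluxDensity, ← mul_sub, abs_mul,
          abs_of_pos (inv_pos.2 (pow_pos hs (d - 1)))]
        congr 2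
        ring
    _ ≤ (s ^ (d - 1))⁻¹ * (|f a₁ - f a₂| * |Q₁| + |f a₂| * |Q₁ - Q₂|) := by
        gcongr
        exact (abs_add_le _ _).trans_eq (by rw [abs_mul, abs_mul])
    _ ≤ (s ^ (d - 1))⁻¹ * (K * (‖w₁ - w₂‖ * (s ^ 2)⁻¹) * (ρ * s ^ (d - 2))
          + K * (ρ * (s ^ 2)⁻¹) * (‖w₁ - w₂‖ * s ^ (d - 2))) := by
        gcongr
        exact (abs_nonneg _).trans hfa₂
    _ = 2 * K * ρ * ‖w₁ - w₂‖ * ((s ^ (d - 1))⁻¹ * ((s ^ 2)⁻¹ * s ^ (d - 2))) := by ring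
    _ = 2 * K * ρ * ‖w₁ - w₂‖ * (s ^ 3)⁻¹ := by rw [hpow]

theorem intervalIntegrable_fluxDensity (hf : Continuous f) {a b : ℝ} (ha : 0 < a) (hb : 0 < b) :
    IntervalIntegrable (fluxDensity d f w) volume a b :=
  ((continuousOn_fluxDensity hf).mono fun _ hx =>
    lt_of_lt_of_le (lt_min ha hb) hx.1).intervalIntegrable

theorem hasDerivAt_flux (hf : Continuous f) (hr : 0 < r) :
    HasDerivAt (flux d f w) (-fluxDensity d f w r) r := by
  have hflux : flux d f w = fun u => -∫ s in (1 : ℝ)..u, fluxDensity d f w s := by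
    ext u; rw [flux, integral_symm]
  rw [hflux]
  exact (integral_hasDerivAt_right (intervalIntegrable_fluxDensity hf one_pos hr)
    ((continuousOn_fluxDensity hf).stronglyMeasurableAtFilter isOpen_Ioi r hr)
    ((continuousOn_fluxDensity hf).continuousAt (Ioi_mem_nhds hr))).neg

@[simp]
theorem flux_zero : flux d f 0 = 0 := by
  ext; simp [flux]

@[simp]
theorem fluxMoment_zero : fluxMoment d f 0 = 0 := by
  simp [fluxMoment]

theorem abs_flux_sub_le (hd : 3 ≤ d) (hf : LipschitzWith K f) (hf0 : f 0 = 0)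
    (hw₁ : ‖w₁‖ ≤ ρ) (hw₂ : ‖w₂‖ ≤ ρ) (hr : 0 < r) (hr1 : r ≤ 1) :
    |flux d f w₁ r - flux d f w₂ r| ≤ K * ρ * ‖w₁ - w₂‖ * (r ^ 2)⁻¹ := by
  have hρ : 0 ≤ ρ := (norm_nonneg _).trans hw₁
  rw [flux, flux, ← integral_sub (intervalIntegrable_fluxDensity hf.continuous hr one_pos)
    (intervalIntegrable_fluxDensity hf.continuous hr one_pos)]
  convert abs_integral_le_of_abs_le_inv_pow_three hr hr1 (by positivity)
    fun s hs => abs_fluxDensity_sub_le hd hf hf0 hw₁ hw₂ (hr.trans hs.1) using 1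
  ring

theorem abs_flux_le (hd : 3 ≤ d) (hf : LipschitzWith K f) (hf0 : f 0 = 0) (hr : 0 < r)
    (hr1 : r ≤ 1) : |flux d f w r| ≤ K * ‖w‖ * ‖w‖ * (r ^ 2)⁻¹ := by
  simpa using abs_flux_sub_le (w₂ := 0) hd hf hf0 le_rfl (by simp) hr hr1

theorem intervalIntegrable_pow_mul_flux (hd : 3 ≤ d) (hf : LipschitzWith K f) (hf0 : f 0 = 0) :
    IntervalIntegrable (fun s => s ^ (d - 1) * flux d f w s) volume 0 1 :=
  intervalIntegrable_of_continuousOn_Ioc_of_abs_le zero_le_one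
    ((continuousOn_pow _).mul fun _ hs =>
      (hasDerivAt_flux hf.continuous hs.1).continuousAt.continuousWithinAt)
    fun _ hs => abs_pow_mul_le_of_abs_le_mul_inv_sq hd hs (abs_flux_le hd hf hf0 hs.1 hs.2)

theorem abs_fluxMoment_sub_le (hd : 3 ≤ d) (hf : LipschitzWith K f) (hf0 : f 0 = 0)
    (hw₁ : ‖w₁‖ ≤ ρ) (hw₂ : ‖w₂‖ ≤ ρ) :
    |fluxMoment d f w₁ - fluxMoment d f w₂| ≤ K * ρ * ‖w₁ - w₂‖ := by
  rw [fluxMoment, fluxMoment, ← integral_sub (intervalIntegrable_pow_mul_flux hd hf hf0)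
    (intervalIntegrable_pow_mul_flux hd hf hf0)]
  simp_rw [← mul_sub]
  have hpoint : ∀ s ∈ Ι (0 : ℝ) 1,
      ‖s ^ (d - 1) * (flux d f w₁ s - flux d f w₂ s)‖ ≤ K * ρ * ‖w₁ - w₂‖ := fun s hs => by
    rw [uIoc_of_le zero_le_one] at hs
    exact abs_pow_mul_le_of_abs_le_mul_inv_sq hd hs (abs_flux_sub_le hd hf hf0 hw₁ hw₂ hs.1 hs.2)
  simpa using norm_integral_le_of_norm_le_const hpoint

theorem picardMap_zero : picardMap d f m 0 r = d * m * r ^ 2 := by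
  simp [picardMap]

theorem continuousOn_picardMap (hf : Continuous f) : ContinuousOn (picardMap d f m w) (Ioi 0) :=
  (continuous_const.mul (continuous_pow 2)).continuousOn.add
    ((continuousOn_pow 2).mul fun _ hr => (hasDerivAt_flux hf hr).continuousAt.continuousWithinAt)

theorem abs_picardMap_sub_le (hd : 3 ≤ d) (hf : LipschitzWith K f) (hf0 : f 0 = 0)
    (hw₁ : ‖w₁‖ ≤ ρ) (hw₂ : ‖w₂‖ ≤ ρ) (hr : r ∈ Ioc 0 1) :
    |picardMap d f m w₁ r - picardMap d f m w₂ r| ≤ (d + 1) * K * ρ * ‖w₁ - w₂‖ := by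
  have hr2 : 0 < r ^ 2 := by positivity [hr.1]
  have hr21 : r ^ 2 ≤ 1 := pow_le_one₀ hr.1.le hr.2
  have hJ := abs_fluxMoment_sub_le hd hf hf0 hw₁ hw₂
  have hI := abs_flux_sub_le hd hf hf0 hw₁ hw₂ hr.1 hr.2
  have hε : 0 ≤ (K : ℝ) * ρ * ‖w₁ - w₂‖ := (abs_nonneg _).trans hJ
  calc |picardMap d f m w₁ r - picardMap d f m w₂ r|
      = |d * r ^ 2 * (fluxMoment d f w₂ - fluxMoment d f w₁)
          + r ^ 2 * (flux d f w₁ r - flux d f w₂ r)| := by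
        rw [picardMap, picardMap]
        congr 1
        ring
    _ ≤ d * r ^ 2 * |fluxMoment d f w₁ - fluxMoment d f w₂|
          + r ^ 2 * |flux d f w₁ r - flux d f w₂ r| := by
        refine (abs_add_le _ _).trans_eq ?_
        rw [abs_mul, abs_mul, abs_mul, abs_sub_comm (fluxMoment d f w₂),
          abs_of_nonneg (by positivity), abs_of_pos hr2]
    _ ≤ d * 1 * (K * ρ * ‖w₁ - w₂‖) + r ^ 2 * (K * ρ * ‖w₁ - w₂‖ * (r ^ 2)⁻¹) := by
        gcongr
    _ = (d + 1) * K * ρ * ‖w₁ - w₂‖ := by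
        rw [mul_comm (r ^ 2), inv_mul_cancel_right₀ hr2.ne']; ring

theorem abs_picardMap_le (hd : 3 ≤ d) (hf : LipschitzWith K f) (hf0 : f 0 = 0)
    (hr : r ∈ Ioc 0 1) : |picardMap d f m w r| ≤ d * |m| + (d + 1) * K * ‖w‖ * ‖w‖ := by
  have h := abs_picardMap_sub_le (m := m) (w₁ := w) (w₂ := 0) hd hf hf0 le_rfl (by simp) hr
  rw [picardMap_zero, sub_zero] at h
  have h0 : |(d : ℝ) * m * r ^ 2| ≤ d * |m| := by
    rw [abs_mul, abs_mul, Nat.abs_cast, abs_of_nonneg (sq_nonneg r)]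
    exact mul_le_of_le_one_right (by positivity) (pow_le_one₀ hr.1.le hr.2)
  linarith [abs_sub_abs_le_abs_sub (picardMap d f m w r) (d * m * r ^ 2)]

/-- In logarithmic coordinates, frozen on `t ≥ 0` (i.e. at `r = 1`) so that the image is a
bounded continuous function on all of `ℝ`. -/
noncomputable def picardOp (d : ℕ) (f : ℝ → ℝ) (K : ℝ≥0) (hd : 3 ≤ d) (hf : LipschitzWith K f)
    (hf0 : f 0 = 0) (m : ℝ) (w : ℝ →ᵇ ℝ) : ℝ →ᵇ ℝ :=
  BoundedContinuousFunction.ofNormedAddCommGroup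
    (fun t => picardMap d f m w (min 1 (Real.exp t)))
    ((continuousOn_picardMap hf.continuous).comp_continuous
      (continuous_const.min Real.continuous_exp) fun t => lt_min one_pos (Real.exp_pos t))
    (d * |m| + (d + 1) * K * ‖w‖ * ‖w‖)
    fun t => abs_picardMap_le hd hf hf0 ⟨lt_min one_pos (Real.exp_pos t), min_le_left _ _⟩

theorem picardOp_apply_log (hd : 3 ≤ d) (hf : LipschitzWith K f) (hf0 : f 0 = 0)
    (hr : r ∈ Ioc 0 1) : picardOp d f K hd hf hf0 m w (Real.log r) = picardMap d f m w r := by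
  simp [picardOp, Real.exp_log hr.1, hr.2]

theorem dist_picardOp_le (hd : 3 ≤ d) (hf : LipschitzWith K f) (hf0 : f 0 = 0)
    (hw₁ : ‖w₁‖ ≤ ρ) (hw₂ : ‖w₂‖ ≤ ρ) :
    dist (picardOp d f K hd hf hf0 m w₁) (picardOp d f K hd hf hf0 m w₂)
      ≤ (d + 1) * K * ρ * dist w₁ w₂ := by
  have hρ : 0 ≤ ρ := (norm_nonneg _).trans hw₁
  refine (BoundedContinuousFunction.dist_le (by positivity)).2 fun t => ?_
  rw [Real.dist_eq, dist_eq_norm]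
  exact abs_picardMap_sub_le hd hf hf0 hw₁ hw₂ ⟨lt_min one_pos (Real.exp_pos t), min_le_left _ _⟩

/-- On the ball of radius `2 d m` the Lipschitz constant `2 d (d + 1) K m` of `picardOp` is at
most `1 / 2`, and `‖picardOp 0‖ ≤ d m` is half the radius. -/
theorem exists_isFixedPt_picardOp (hd : 3 ≤ d) (hf : LipschitzWith K f) (hf0 : f 0 = 0)
    (hm : 0 ≤ m) (hsmall : 4 * d * (d + 1) * K * m ≤ 1) :
    ∃ w, IsFixedPt (picardOp d f K hd hf hf0 m) w := by
  set ρ := 2 * d * m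
  have hlip : LipschitzOnWith (1 / 2) (picardOp d f K hd hf hf0 m) (closedBall 0 ρ) := by
    refine LipschitzOnWith.of_dist_le_mul fun w₁ hw₁ w₂ hw₂ => ?_
    rw [mem_closedBall, dist_zero_right] at hw₁ hw₂
    refine (dist_picardOp_le hd hf hf0 hw₁ hw₂).trans (mul_le_mul_of_nonneg_right ?_ dist_nonneg)
    push_cast
    linarith
  have hzero : dist (picardOp d f K hd hf hf0 m 0) 0 ≤ (1 - (1 / 2 : ℝ≥0)) * ρ := by
    rw [dist_zero_right]
    refine (BoundedContinuousFunction.norm_ofNormedAddCommGroup_le _ (by positivity) _).trans ?_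
    norm_num [abs_of_nonneg hm, ρ]
    linarith
  obtain ⟨w, -, hw⟩ := exists_isFixedPt_of_lipschitzOnWith_closedBall (by norm_num) hlip hzero
  exact ⟨w, hw⟩

theorem abs_radialProfile_mul_rpow_le (hd : 3 ≤ d) (hr : 0 < r) :
    |radialProfile d w r * r ^ ((2 : ℝ) - d)| ≤ ‖w‖ := by
  have h := rpow_natCast_sub_natCast hr (a := 2) (n := d) (by omega)
  rw [Nat.cast_ofNat] at h
  have hpos : 0 < r ^ (d - 2) := pow_pos hr _
  rw [h, abs_mul, abs_inv, abs_of_pos hpos, ← div_eq_mul_inv, div_le_iff₀ hpos]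
  exact abs_radialProfile_le hd hr.le

theorem radialDeriv_mul_rpow (hd : 3 ≤ d) (hr : 0 < r) :
    radialDeriv d w r * r ^ ((3 : ℝ) - d) = w (Real.log r) := by
  have h := rpow_natCast_sub_natCast hr (a := 3) (n := d) hd
  rw [Nat.cast_ofNat] at h
  rw [h, radialDeriv, mul_comm, inv_mul_cancel_left₀ (pow_ne_zero _ hr.ne')]

theorem radialDeriv_mul_rpow_one_sub (hd : 3 ≤ d) (hr : 0 < r) :
    radialDeriv d w r * r ^ ((1 : ℝ) - d) = w (Real.log r) * (r ^ 2)⁻¹ := by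
  have h := rpow_natCast_sub_natCast hr (a := 1) (n := d) (by omega)
  rw [Nat.cast_one] at h
  rw [h, radialDeriv, show d - 1 = d - 3 + 2 by omega, pow_add]
  field_simp

theorem radialDeriv_eq_of_isFixedPt (hd : 3 ≤ d) (hf : LipschitzWith K f) (hf0 : f 0 = 0)
    (hw : IsFixedPt (picardOp d f K hd hf hf0 m) w) (hr : r ∈ Ioc 0 1) :
    radialDeriv d w r
      = d * (m - fluxMoment d f w) * r ^ (d - 1) + r ^ (d - 1) * flux d f w r := by
  have hlog : w (Real.log r) = picardMap d f m w r := by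
    rw [← picardOp_apply_log hd hf hf0 hr, hw]
  rw [radialDeriv, hlog, picardMap, show d - 1 = d - 3 + 2 by omega, pow_add]
  ring

theorem radialProfile_one_of_isFixedPt (hd : 3 ≤ d) (hf : LipschitzWith K f) (hf0 : f 0 = 0)
    (hw : IsFixedPt (picardOp d f K hd hf hf0 m) w) : radialProfile d w 1 = m := by
  set c := (d : ℝ) * (m - fluxMoment d f w)
  have hd' : ((d - 1 : ℕ) : ℝ) + 1 = d := by push_cast [Nat.cast_sub (by omega : 1 ≤ d)]; ring
  have hd0 : (d : ℝ) ≠ 0 := by positivity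
  have hc : IntervalIntegrable (fun t : ℝ => c * t ^ (d - 1)) volume 0 1 :=
    (continuous_const.mul (continuous_pow _)).intervalIntegrable _ _
  have hsplit : radialProfile d w 1
      = ∫ t in (0 : ℝ)..1, (c * t ^ (d - 1) + t ^ (d - 1) * flux d f w t) :=
    integral_congr_ae (ae_of_all _ fun t ht =>
      radialDeriv_eq_of_isFixedPt hd hf hf0 hw (uIoc_of_le (zero_le_one' ℝ) ▸ ht))
  rw [hsplit, integral_add hc (intervalIntegrable_pow_mul_flux hd hf hf0),
    intervalIntegral.integral_const_mul, integral_pow, hd', zero_pow (by omega)]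
  change _ + fluxMoment d f w = m
  field_simp
  ring

theorem hasDerivAt_radialDeriv_of_isFixedPt (hd : 3 ≤ d) (hf : LipschitzWith K f)
    (hf0 : f 0 = 0) (hw : IsFixedPt (picardOp d f K hd hf hf0 m) w) (hr : r ∈ Ioo 0 1) :
    HasDerivAt (radialDeriv d w) (radialSecondDeriv d f w r) r := by
  set c := (d : ℝ) * (m - fluxMoment d f w)
  have hr0 : 0 < r := hr.1
  have heq : radialDeriv d w =ᶠ[nhds r] fun u => c * u ^ (d - 1) + u ^ (d - 1) * flux d f w u :=
    Filter.eventually_of_mem (Ioo_mem_nhds hr.1 hr.2) fun u hu =>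
      radialDeriv_eq_of_isFixedPt hd hf hf0 hw ⟨hu.1, hu.2.le⟩
  have hpow : HasDerivAt (fun u : ℝ => u ^ (d - 1)) ((d - 1) * r ^ (d - 2)) r := by
    have h := hasDerivAt_pow (d - 1) r
    rwa [Nat.cast_sub (by omega), Nat.cast_one, show d - 1 - 1 = d - 2 by omega] at h
  have hsource : f (radialDeriv d w r * r ^ ((1 : ℝ) - d)) * radialProfile d w r
      = r ^ (d - 1) * fluxDensity d f w r := by
    rw [radialDeriv_mul_rpow_one_sub hd hr0, fluxDensity,
      mul_inv_cancel_left₀ (pow_ne_zero _ hr0.ne')]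
  refine (((hpow.const_mul c).add (hpow.mul (hasDerivAt_flux hf.continuous hr0)))
    |>.congr_of_eventuallyEq heq).congr_deriv ?_
  rw [radialSecondDeriv, hsource, radialDeriv_eq_of_isFixedPt hd hf hf0 hw ⟨hr.1, hr.2.le⟩,
    show d - 1 = d - 2 + 1 by omega, pow_succ]
  field_simp
  ring

end RadialBVP

open RadialBVP in
theorem stmt_13_general (d : ℕ) (hd : 3 ≤ d) (L σ : ℝ)
    (R : ℝ → ℝ) (hRlip : ∀ x y : ℝ, |R x - R y| ≤ L * |x - y|) (hR0 : R 0 = 0) :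
    ∃ m₀ : ℝ, 0 < m₀ ∧ ∀ m ∈ Ioo (0:ℝ) m₀,
      ∃ Q Q' Q'' : ℝ → ℝ,
        (∀ r ∈ Ioc (0:ℝ) 1, HasDerivAt Q (Q' r) r) ∧
        ContinuousOn Q' (Ioc (0:ℝ) 1) ∧
        (∃ C : ℝ, ∀ r ∈ Ioc (0:ℝ) 1,
          |Q r * r ^ ((2:ℝ) - d)| ≤ C ∧ |Q' r * r ^ ((3:ℝ) - d)| ≤ C) ∧
        ContinuousOn Q (Icc (0:ℝ) 1) ∧ Q 0 = 0 ∧ Q 1 = m ∧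
        (∀ r ∈ Ioo (0:ℝ) 1, HasDerivAt Q' (Q'' r) r) ∧
        (∀ r ∈ Ioo (0:ℝ) 1,
          -Q'' r + (d - 1) * r⁻¹ * Q' r = R (Q' r * r ^ ((1:ℝ) - d) * σ⁻¹) * Q r) := by
  set K := Real.toNNReal (L * |σ⁻¹|)
  have hf : LipschitzWith K fun x => R (x * σ⁻¹) := LipschitzWith.of_dist_le' fun x y => by
    simpa [Real.dist_eq, ← sub_mul, abs_mul, mul_assoc, mul_comm |σ|⁻¹]
      using hRlip (x * σ⁻¹) (y * σ⁻¹)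
  have hf0 : (fun x => R (x * σ⁻¹)) 0 = 0 := by simpa using hR0
  refine ⟨1 / (4 * d * (d + 1) * (K + 1)), by positivity, fun m hm => ?_⟩
  have hsmall : 4 * d * (d + 1) * K * m ≤ 1 := by
    have hpos : (0 : ℝ) < 4 * d * (d + 1) * (K + 1) := by positivity
    have := (lt_div_iff₀' hpos).1 hm.2
    nlinarith [hm.1]
  obtain ⟨w, hw⟩ := exists_isFixedPt_picardOp hd hf hf0 hm.1.le hsmall
  refine ⟨radialProfile d w, radialDeriv d w, radialSecondDeriv d _ w,
    fun r hr => hasDerivAt_radialProfile hr.1, continuousOn_radialDeriv.mono fun r hr => hr.1,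
    ⟨‖w‖, fun r hr => ⟨abs_radialProfile_mul_rpow_le hd hr.1, ?_⟩⟩, continuousOn_radialProfile,
    by simp [radialProfile], radialProfile_one_of_isFixedPt hd hf hf0 hw,
    fun r hr => hasDerivAt_radialDeriv_of_isFixedPt hd hf hf0 hw hr,
    fun r _ => by simp only [radialSecondDeriv]; ring⟩
  rw [radialDeriv_mul_rpow hd hr.1]
  exact w.norm_coe_le_norm _

theorem stmt_13 (d : ℕ) (hd : 3 ≤ d) (L σ : ℝ) (hL : 0 ≤ L) (hσ : 0 < σ)
    (R : ℝ → ℝ) (hRlip : ∀ x y : ℝ, |R x - R y| ≤ L * |x - y|) (hR0 : R 0 = 0) :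
    ∃ m₀ : ℝ, 0 < m₀ ∧ ∀ m ∈ Ioo (0:ℝ) m₀,
      ∃ Q Q' Q'' : ℝ → ℝ,
        (∀ r ∈ Ioc (0:ℝ) 1, HasDerivAt Q (Q' r) r) ∧
        ContinuousOn Q' (Ioc (0:ℝ) 1) ∧
        (∃ C : ℝ, ∀ r ∈ Ioc (0:ℝ) 1,
          |Q r * r ^ ((2:ℝ) - d)| ≤ C ∧ |Q' r * r ^ ((3:ℝ) - d)| ≤ C) ∧
        ContinuousOn Q (Icc (0:ℝ) 1) ∧ Q 0 = 0 ∧ Q 1 = m ∧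
        (∀ r ∈ Ioo (0:ℝ) 1, HasDerivAt Q' (Q'' r) r) ∧
        (∀ r ∈ Ioo (0:ℝ) 1,
          -Q'' r + (d - 1) * r⁻¹ * Q' r = R (Q' r * r ^ ((1:ℝ) - d) * σ⁻¹) * Q r) :=
  stmt_13_general d hd L σ R hRlip hR0
end
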